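/- Let H : ℝⁿ → ℝ be smooth, k > 0, T > 0, with Z = ∫ exp(−H/(kT)) dx finite and positive, and ρ̄ = Z⁻¹ exp(−H/(kT)). Let ρ : [t₀,t₁] × ℝⁿ → (0,∞) be a smooth strictly positive solution of the Fokker–Planck equation ∂ρ/∂t = ∇·( (1/(kT))∇H ρ ) + Δρ with ∫ ρ(t,x) dx = 1 for each t. Assume differentiation under the integral sign is valid for t ↦ D(ρ_t‖ρ̄) and that ∫_{ℝⁿ} ∇·( (1 + log(ρ_t/ρ̄)) ρ_t ∇log(ρ_t/ρ̄) ) dx = 0 for each t. Then (d/dt) D(ρ_t‖ρ̄) = −∫_{ℝⁿ} ‖∇ log(ρ_t(x)/ρ̄(x))‖² ρ_t(x) dx ≤ 0; i.e., the relative entropy decreases along the Fokker–Planck flow at a rate equal to minus the relative Fisher information of ρ_t with respect to ρ̄. -/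

import Mathlib

open MeasureTheory Real RealInnerProductSpace

/-- Divergence of a vector field on `ℝⁿ`: `(∇·w)(x) = ∑ᵢ ∂wⁱ/∂xⁱ (x)`. -/
noncomputable def vdiv {n : ℕ} (w : EuclideanSpace ℝ (Fin n) → EuclideanSpace ℝ (Fin n))
    (x : EuclideanSpace ℝ (Fin n)) : ℝ :=
  ∑ i, fderiv ℝ w x (EuclideanSpace.single i 1) i

/-- Laplacian of a scalar field on `ℝⁿ`: `Δf = ∇·(∇f)`. -/
noncomputable def lap {n : ℕ} (f : EuclideanSpace ℝ (Fin n) → ℝ)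
    (x : EuclideanSpace ℝ (Fin n)) : ℝ :=
  vdiv (gradient f) x

section Aux

open InnerProductSpace

variable {n : ℕ}
local notation "E" => EuclideanSpace ℝ (Fin n)

lemma grad_apply (f : E → ℝ) (x v : E) : ⟪gradient f x, v⟫ = fderiv ℝ f x v := by
  rw [gradient, toDual_symm_apply]

lemma grad_smooth {f : E → ℝ} (hf : ContDiff ℝ (⊤ : ℕ∞) f) : ContDiff ℝ (⊤ : ℕ∞) (gradient f) := by
  have : gradient f = fun x => (toDual ℝ E).symm (fderiv ℝ f x) := rfl
  rw [this]
  exact ((toDual ℝ E).symm.toContinuousLinearEquiv.toContinuousLinearMap).contDiff.comp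
    (hf.fderiv_right (by simp))

lemma vdiv_add {w₁ w₂ : E → E} {x : E} (h₁ : DifferentiableAt ℝ w₁ x)
    (h₂ : DifferentiableAt ℝ w₂ x) :
    vdiv (fun y => w₁ y + w₂ y) x = vdiv w₁ x + vdiv w₂ x := by
  unfold vdiv
  rw [← Finset.sum_add_distrib]
  congr 1; funext i
  rw [fderiv_fun_add h₁ h₂]
  simp

lemma vdiv_smul {f : E → ℝ} {w : E → E} {x : E} (hf : DifferentiableAt ℝ f x)
    (hw : DifferentiableAt ℝ w x) :
    vdiv (fun y => f y • w y) x = ⟪gradient f x, w x⟫ + f x * vdiv w x := by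
  unfold vdiv
  have hd : fderiv ℝ (fun y => f y • w y) x
      = f x • fderiv ℝ w x + (fderiv ℝ f x).smulRight (w x) := fderiv_smul hf hw
  have hg : ∀ i, gradient f x i = fderiv ℝ f x (EuclideanSpace.single i 1) := by
    intro i
    rw [← grad_apply, real_inner_comm, EuclideanSpace.inner_single_left]
    simp
  have hinner : ⟪gradient f x, w x⟫ = ∑ i, fderiv ℝ f x (EuclideanSpace.single i 1) * w x i := by
    rw [PiLp.inner_apply]
    simp [hg, mul_comm]
  rw [hinner, Finset.mul_sum, ← Finset.sum_add_distrib]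
  congr 1; funext i
  rw [hd]
  simp [mul_comm]
  ring

lemma grad_log_combo {g Hf : E → ℝ} {x : E} (hg : DifferentiableAt ℝ g x)
    (hH : DifferentiableAt ℝ Hf x) (hgx : g x ≠ 0) (c a : ℝ) :
    gradient (fun y => Real.log (g y) + c + a * Hf y) x
      = (g x)⁻¹ • gradient g x + a • gradient Hf x := by
  have h1 : HasFDerivAt (fun y => Real.log (g y) + c + a * Hf y)
      (((g x)⁻¹ • fderiv ℝ g x) + a • fderiv ℝ Hf x) x :=
    ((hg.hasFDerivAt.log hgx).add_const c).add (hH.hasFDerivAt.const_mul a)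
  rw [gradient, h1.fderiv]
  simp [gradient, map_add]

lemma grad_const_add {f : E → ℝ} {x : E} (c : ℝ) :
    gradient (fun y => c + f y) x = gradient f x := by
  rw [gradient, fderiv_const_add]; rfl

end Aux

/-- Let `H` be smooth, `k, T > 0`, `Z = ∫ exp(-H/(kT))` finite positive,
and `ρb = Z⁻¹ exp(-H/(kT))` the Boltzmann density.  Let `ρ` be a smooth strictly positive
solution of the Fokker–Planck equation `∂ρ/∂t = ∇·((1/(kT))∇H ρ) + Δρ` of unit mass.
Under differentiation under the integral sign and vanishing of the boundary terms,
`(d/dt) D(ρ_t‖ρb) = -∫ ‖∇log(ρ_t/ρb)‖² ρ_t dx ≤ 0`: the relative entropy decreases at a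
rate equal to minus the relative Fisher information of `ρ_t` with respect to `ρb`. -/
theorem relEntropy_dissipation_fokkerPlanck {n : ℕ} (t₀ t₁ : ℝ) (ht : t₀ < t₁)
    (H : EuclideanSpace ℝ (Fin n) → ℝ) (hHs : ContDiff ℝ (⊤ : ℕ∞) H)
    (k T : ℝ) (hk : 0 < k) (hT : 0 < T)
    (hint : Integrable (fun x : EuclideanSpace ℝ (Fin n) => Real.exp (-H x / (k * T))))
    (Z : ℝ) (hZ : Z = ∫ x : EuclideanSpace ℝ (Fin n), Real.exp (-H x / (k * T)))
    (hZpos : 0 < Z)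
    (ρb : EuclideanSpace ℝ (Fin n) → ℝ)
    (hρb : ρb = fun x => Z⁻¹ * Real.exp (-H x / (k * T)))
    (ρ : ℝ → EuclideanSpace ℝ (Fin n) → ℝ)
    (hρs : ContDiff ℝ (⊤ : ℕ∞) (fun p : ℝ × EuclideanSpace ℝ (Fin n) => ρ p.1 p.2))
    (hρpos : ∀ t x, 0 < ρ t x) (hρ1 : ∀ t, ∫ x, ρ t x = 1)
    (hFP : ∀ t ∈ Set.Icc t₀ t₁, ∀ x,
      deriv (fun s => ρ s x) t
        = vdiv (fun y => ρ t y • ((k * T)⁻¹ • gradient H y)) x + lap (ρ t) x)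
    (hDUI : ∀ t ∈ Set.Icc t₀ t₁,
      HasDerivAt (fun s => ∫ x, ρ s x * Real.log (ρ s x / ρb x))
        (∫ x, deriv (fun s => ρ s x) t * (1 + Real.log (ρ t x / ρb x))) t)
    (hbdry : ∀ t ∈ Set.Icc t₀ t₁,
      (Integrable (fun x => vdiv (fun y => (1 + Real.log (ρ t y / ρb y)) •
          (ρ t y • gradient (fun z => Real.log (ρ t z / ρb z)) y)) x))
        ∧ ∫ x, vdiv (fun y => (1 + Real.log (ρ t y / ρb y)) •
            (ρ t y • gradient (fun z => Real.log (ρ t z / ρb z)) y)) x = 0) :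
    ∀ t ∈ Set.Icc t₀ t₁,
      HasDerivAt (fun s => ∫ x, ρ s x * Real.log (ρ s x / ρb x))
        (-∫ x, ‖gradient (fun y => Real.log (ρ t y / ρb y)) x‖ ^ 2 * ρ t x) t
      ∧ (-∫ x, ‖gradient (fun y => Real.log (ρ t y / ρb y)) x‖ ^ 2 * ρ t x) ≤ 0 := by
  intro t htm
  have hkT : (0:ℝ) < k * T := mul_pos hk hT
  -- smoothness of ρ t
  have hρt : ContDiff ℝ (⊤ : ℕ∞) (ρ t) := hρs.comp (ContDiff.prodMk (contDiff_const (c := t)) contDiff_id)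
  have hρtd : Differentiable ℝ (ρ t) := hρt.differentiable (by simp)
  have hgρ : ContDiff ℝ (⊤ : ℕ∞) (gradient (ρ t)) := grad_smooth hρt
  have hgH : ContDiff ℝ (⊤ : ℕ∞) (gradient H) := grad_smooth hHs
  -- rewrite of the log-ratio
  have hL : (fun z => Real.log (ρ t z / ρb z))
      = fun y => Real.log (ρ t y) + Real.log Z + (k * T)⁻¹ * H y := by
    funext y
    rw [hρb]
    rw [Real.log_div (ne_of_gt (hρpos t y)) (by positivity)]
    rw [Real.log_mul (by positivity) (Real.exp_ne_zero _), Real.log_inv, Real.log_exp]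
    field_simp
    ring
  have hLd : ∀ y, DifferentiableAt ℝ (fun z => Real.log (ρ t z / ρb z)) y := by
    intro y
    rw [hL]
    exact (((hρtd y).log (ne_of_gt (hρpos t y))).add_const _).add ((hHs.differentiable (by simp) y).const_mul _)
  have hgradL : ∀ y, gradient (fun z => Real.log (ρ t z / ρb z)) y
      = (ρ t y)⁻¹ • gradient (ρ t) y + (k * T)⁻¹ • gradient H y := by
    intro y
    rw [hL]
    exact grad_log_combo (hρtd y) (hHs.differentiable (by simp) y) (ne_of_gt (hρpos t y)) _ _
  -- the probability flux
  have hw : (fun y => ρ t y • gradient (fun z => Real.log (ρ t z / ρb z)) y)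
      = fun y => gradient (ρ t) y + ρ t y • ((k * T)⁻¹ • gradient H y) := by
    funext y
    rw [hgradL y, smul_add, smul_smul, mul_inv_cancel₀ (ne_of_gt (hρpos t y)), one_smul]
  have hwdiff : Differentiable ℝ
      (fun y => ρ t y • gradient (fun z => Real.log (ρ t z / ρb z)) y) := by
    rw [hw]
    exact fun y => ((hgρ.differentiable (by simp) y).add
      ((hρtd y).fun_smul ((hgH.differentiable (by simp) y).fun_const_smul _)))
  have hvdivw : ∀ x, vdiv (fun y => ρ t y • gradient (fun z => Real.log (ρ t z / ρb z)) y) x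
      = deriv (fun s => ρ s x) t := by
    intro x
    rw [hw, vdiv_add (hgρ.differentiable (by simp) x)
      ((hρtd x).fun_smul ((hgH.differentiable (by simp) x).fun_const_smul _))]
    rw [hFP t htm x, lap]
    ring
  -- pointwise identity
  have key : ∀ x, deriv (fun s => ρ s x) t * (1 + Real.log (ρ t x / ρb x))
      = vdiv (fun y => (1 + Real.log (ρ t y / ρb y)) •
          (ρ t y • gradient (fun z => Real.log (ρ t z / ρb z)) y)) x
        - ‖gradient (fun y => Real.log (ρ t y / ρb y)) x‖ ^ 2 * ρ t x := by
    intro x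
    rw [vdiv_smul ((hLd x).const_add 1) (hwdiff x), grad_const_add,
      hvdivw x, real_inner_smul_right, real_inner_self_eq_norm_sq]
    ring
  have hGint := (hbdry t htm).1
  have hGzero := (hbdry t htm).2
  set F : EuclideanSpace ℝ (Fin n) → ℝ :=
    fun x => ‖gradient (fun y => Real.log (ρ t y / ρb y)) x‖ ^ 2 * ρ t x with hF
  set G : EuclideanSpace ℝ (Fin n) → ℝ :=
    fun x => vdiv (fun y => (1 + Real.log (ρ t y / ρb y)) •
          (ρ t y • gradient (fun z => Real.log (ρ t z / ρb z)) y)) x with hG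
  have hfun : (fun x => deriv (fun s => ρ s x) t * (1 + Real.log (ρ t x / ρb x)))
      = fun x => G x - F x := funext key
  have hval : (∫ x, deriv (fun s => ρ s x) t * (1 + Real.log (ρ t x / ρb x))) = -∫ x, F x := by
    by_cases hFint : Integrable F
    · rw [show (fun x => deriv (fun s => ρ s x) t * (1 + Real.log (ρ t x / ρb x)))
          = fun x => G x - F x from hfun] at *
      rw [integral_sub hGint hFint, hGzero, zero_sub]
    · have hnd : ¬ Integrable (fun x => G x - F x) := by
        intro h
        have : Integrable (fun x => G x - (G x - F x)) := hGint.sub h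
        simp only [sub_sub_cancel] at this
        exact hFint this
      rw [hfun, integral_undef hnd, integral_undef hFint, neg_zero]
  constructor
  · exact hval ▸ hDUI t htm
  · rw [neg_nonpos]
    exact integral_nonneg fun x => mul_nonneg (sq_nonneg _) (le_of_lt (hρpos t x))
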